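/- arXiv:1911.04025 — 2 statements merged into one kernel-verified Lean document; each statement's English description precedes it below -/
import Mathlib

section
/- For every integer n ≥ 3, the variance of D under a uniformly random triangulation of P_n equals 2(2n−3)(n−2)(n−3) / (n²(n+1)); that is, as an identity of rational numbers, (1/C_{n−2}) · ∑_T D(T)² − ( (1/C_{n−2}) · ∑_T D(T) )² = 2(2n−3)(n−2)(n−3) / (n²(n+1)), the sums ranging over all triangulations T of P_n. -/
open Finset
open scoped Classical

/-- `IsDiag l r i j` : the pair `{i, j}` (written with `i < j`) is a diagonal of the
convex sub-polygon on vertices `{l, …, r}`. -/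
def IsDiag (l r i j : ℕ) : Prop :=
  l ≤ i ∧ i + 2 ≤ j ∧ j ≤ r ∧ ¬(i = l ∧ j = r)

/-- Two diagonals `{a, b}` and `{c, d}` (written with `a < b`, `c < d`) cross. -/
def Crosses (a b c d : ℕ) : Prop :=
  (a < c ∧ c < b ∧ b < d) ∨ (c < a ∧ a < d ∧ d < b)

/-- All diagonals of the sub-polygon on `{l, …, r}`, as ordered pairs. -/
noncomputable def allDiags (l r : ℕ) : Finset (ℕ × ℕ) :=
  (range (r + 1) ×ˢ range (r + 1)).filter fun p => IsDiag l r p.1 p.2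

/-- The triangulations of the sub-polygon on `{l, …, r}` : sets of `r - l - 2`
pairwise noncrossing diagonals. -/
noncomputable def triangulations (l r : ℕ) : Finset (Finset (ℕ × ℕ)) :=
  (allDiags l r).powerset.filter fun T =>
    T.card = r - l - 2 ∧ ∀ d ∈ T, ∀ e ∈ T, ¬ Crosses d.1 d.2 e.1 e.2

/-- `IsEdge l r i j` : the pair `{i, j}` (with `i < j`) is an edge (boundary side) of the
sub-polygon on `{l, …, r}`. -/
def IsEdge (l r i j : ℕ) : Prop :=
  (l ≤ i ∧ j = i + 1 ∧ j ≤ r) ∨ (i = l ∧ j = r)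

/-- `{i, j}` is a side available in the triangulation `T` (an edge of the polygon or a
diagonal of `T`). -/
def IsSide (l r : ℕ) (T : Finset (ℕ × ℕ)) (i j : ℕ) : Prop :=
  IsEdge l r i j ∨ (i, j) ∈ T

/-- The triangles of a triangulation `T` of the sub-polygon on `{l, …, r}`, as ordered
triples `(a, b, c)` with `a < b < c`, each of whose three sides is an edge or a diagonal
of `T`. -/
noncomputable def triangles (l r : ℕ) (T : Finset (ℕ × ℕ)) : Finset (ℕ × ℕ × ℕ) :=
  (range (r + 1) ×ˢ range (r + 1) ×ˢ range (r + 1)).filter fun t =>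
    t.1 < t.2.1 ∧ t.2.1 < t.2.2 ∧
      IsSide l r T t.1 t.2.1 ∧ IsSide l r T t.2.1 t.2.2 ∧ IsSide l r T t.1 t.2.2

/-- The number of sides of the triangle `{a, b, c}` (with `a < b < c`) that are edges of
the sub-polygon on `{l, …, r}`. -/
noncomputable def edgeCount (l r a b c : ℕ) : ℕ :=
  (if IsEdge l r a b then 1 else 0) + (if IsEdge l r b c then 1 else 0) +
    (if IsEdge l r a c then 1 else 0)

/-- `O(T)` : the number of triangles of `T` with exactly one side an edge of `P_n`. -/
noncomputable def oneSideCount (n : ℕ) (T : Finset (ℕ × ℕ)) : ℕ :=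
  ((triangles 1 n T).filter fun t => edgeCount 1 n t.1 t.2.1 t.2.2 = 1).card

/-- `Ear(T)` : the number of triangles of `T` with at least two sides edges of `P_n`. -/
noncomputable def earCount (n : ℕ) (T : Finset (ℕ × ℕ)) : ℕ :=
  ((triangles 1 n T).filter fun t => 2 ≤ edgeCount 1 n t.1 t.2.1 t.2.2).card

/-- `D(T)` : the number of triangles of `T` containing vertex `1`. -/
noncomputable def degOne (n : ℕ) (T : Finset (ℕ × ℕ)) : ℕ :=
  ((triangles 1 n T).filter fun t => t.1 = 1 ∨ t.2.1 = 1 ∨ t.2.2 = 1).card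

/-- `B(T)` : the number of triangles `{l, j, r}` of `T` (with `l < j < r`) such that
`j - l = 1`. -/
noncomputable def blueCount (n : ℕ) (T : Finset (ℕ × ℕ)) : ℕ :=
  ((triangles 1 n T).filter fun t => t.2.1 - t.1 = 1).card

/-- `A_i(T)` : the number of triangles `{1, a, b}` of `T` containing vertex `1`
(written with `1 < a < b`) such that `b - a = i`. -/
noncomputable def angleCount (n : ℕ) (T : Finset (ℕ × ℕ)) (i : ℕ) : ℕ :=
  ((triangles 1 n T).filter fun t => t.1 = 1 ∧ t.2.2 - t.2.1 = i).card

/-!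
Cutting a triangulation of the polygon on `{l, …, r}` along the triangle on its base `{l, r}`,
with apex `k`, leaves triangulations of `{l, …, k}` and `{k, …, r}`, and conversely any two such
triangulations glue back. That the pieces are again triangulations rests on the bound: at most
`r - l - 2` pairwise noncrossing diagonals fit in the polygon. The bijection gives the Catalan
count, and shows that the fan of triangles at `l` is the fan of the left piece plus the triangle
`{l, k, r}`. Summing `D` and `D²` over the decomposition and using Catalan convolutions gives
`∑ D = C_{n-1} - C_{n-2}` and `∑ D² = 2 C_n - 5 C_{n-1} + C_{n-2}`; the ratio
`C_{k+1} / C_k = 2 (2k + 1) / (k + 2)` turns these into the variance.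
-/

lemma sum_Ico_eq_sum_antidiagonal {M : Type*} [AddCommMonoid M] (a m : ℕ) (g : ℕ → M) :
    ∑ k ∈ Ico a (a + m + 1), g k = ∑ p ∈ antidiagonal m, g (a + p.1) := by
  rw [sum_Ico_eq_sum_range, Nat.sum_antidiagonal_eq_sum_range_succ (fun i _ => g (a + i)),
    show a + m + 1 - a = m.succ by omega]

lemma catalan_add_two (m : ℕ) :
    catalan (m + 2) = catalan (m + 1) + ∑ p ∈ antidiagonal m, catalan (p.1 + 1) * catalan p.2 := by
  rw [catalan_succ', Nat.sum_antidiagonal_succ, catalan_zero, one_mul]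

lemma catalan_add_three (m : ℕ) :
    catalan (m + 3) = catalan (m + 2) + catalan (m + 1) +
      ∑ p ∈ antidiagonal m, catalan (p.1 + 2) * catalan p.2 := by
  rw [catalan_succ', Nat.sum_antidiagonal_succ, Nat.sum_antidiagonal_succ, catalan_zero,
    catalan_one]
  simp only [one_mul, add_assoc]

lemma catalan_pos (n : ℕ) : 0 < catalan n :=
  Nat.pos_of_mul_pos_left ((succ_mul_catalan_eq_centralBinom n).symm ▸ n.centralBinom_pos)

lemma succ_succ_mul_catalan_succ (n : ℕ) :
    (n + 2) * catalan (n + 1) = 2 * (2 * n + 1) * catalan n := by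
  refine Nat.eq_of_mul_eq_mul_left n.succ_pos ?_
  calc (n + 1) * ((n + 2) * catalan (n + 1))
      = (n + 1) * (n + 1).centralBinom := by rw [← succ_mul_catalan_eq_centralBinom]
    _ = 2 * (2 * n + 1) * n.centralBinom := Nat.succ_mul_centralBinom_succ n
    _ = (n + 1) * (2 * (2 * n + 1) * catalan n) := by
        rw [← succ_mul_catalan_eq_centralBinom]; ring

def Noncrossing (S : Finset (ℕ × ℕ)) : Prop :=
  ∀ p ∈ S, ∀ q ∈ S, ¬ Crosses p.1 p.2 q.1 q.2

lemma Noncrossing.subset {A B : Finset (ℕ × ℕ)} (hB : Noncrossing B) (h : A ⊆ B) :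
    Noncrossing A :=
  fun p hp q hq => hB p (h hp) q (h hq)

lemma crosses_comm {a b c d : ℕ} : Crosses a b c d ↔ Crosses c d a b := by
  unfold Crosses
  tauto

lemma not_crosses_of_le {a b c d : ℕ} (hab : a < b) (hbc : b ≤ c) : ¬ Crosses a b c d := by
  unfold Crosses
  omega

lemma not_crosses_of_le_of_le {l r c d : ℕ} (hl : l ≤ c) (hr : d ≤ r) : ¬ Crosses l r c d := by
  unfold Crosses
  omega

lemma Noncrossing.union {A B : Finset (ℕ × ℕ)} {k : ℕ} (hA : Noncrossing A)
    (hB : Noncrossing B) (hAk : ∀ p ∈ A, p.1 < p.2 ∧ p.2 ≤ k) (hBk : ∀ q ∈ B, k ≤ q.1) :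
    Noncrossing (A ∪ B) := by
  intro p hp q hq
  rcases mem_union.1 hp with hp | hp <;> rcases mem_union.1 hq with hq | hq
  · exact hA p hp q hq
  · exact not_crosses_of_le (hAk p hp).1 ((hAk p hp).2.trans (hBk q hq))
  · rw [crosses_comm]
    exact not_crosses_of_le (hAk q hq).1 ((hAk q hq).2.trans (hBk p hp))
  · exact hB p hp q hq

lemma mem_allDiags {l r : ℕ} {p : ℕ × ℕ} : p ∈ allDiags l r ↔ IsDiag l r p.1 p.2 := by
  rw [allDiags, mem_filter]
  simp only [mem_product, mem_range, IsDiag]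
  omega

lemma allDiags_eq_empty {l r : ℕ} (h : r ≤ l + 2) : allDiags l r = ∅ := by
  ext p
  simp only [mem_allDiags, IsDiag, notMem_empty, iff_false]
  omega

lemma mem_triangulations {l r : ℕ} {T : Finset (ℕ × ℕ)} :
    T ∈ triangulations l r ↔ T ⊆ allDiags l r ∧ T.card = r - l - 2 ∧ Noncrossing T := by
  simp only [triangulations, mem_filter, mem_powerset, Noncrossing]

lemma triangulations_eq_singleton_empty {l r : ℕ} (h : r ≤ l + 2) :
    triangulations l r = {∅} := by
  ext T
  simp only [mem_triangulations, allDiags_eq_empty h, subset_empty, mem_singleton]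
  constructor
  · exact fun hT => hT.1
  · rintro rfl
    exact ⟨rfl, by rw [card_empty]; omega, fun p hp => absurd hp (notMem_empty p)⟩

/-- Adds the base `(l, r)` when it is a diagonal, not an edge, of an enclosing polygon. -/
noncomputable def withBase (l r : ℕ) (S : Finset (ℕ × ℕ)) : Finset (ℕ × ℕ) :=
  if l + 2 ≤ r then insert (l, r) S else S

section withBase

variable {l r : ℕ} {S : Finset (ℕ × ℕ)}

lemma mem_withBase {p : ℕ × ℕ} : p ∈ withBase l r S ↔ p ∈ S ∨ (p = (l, r) ∧ l + 2 ≤ r) := by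
  unfold withBase
  split_ifs with h <;> simp [h, or_comm]

lemma bounds_of_mem_withBase (hS : S ⊆ allDiags l r) {p : ℕ × ℕ} (hp : p ∈ withBase l r S) :
    l ≤ p.1 ∧ p.1 + 2 ≤ p.2 ∧ p.2 ≤ r := by
  rcases mem_withBase.1 hp with hp | ⟨rfl, h⟩
  · have := mem_allDiags.1 (hS hp)
    unfold IsDiag at this
    omega
  · exact ⟨le_rfl, h, le_rfl⟩

lemma card_withBase (hS : S ⊆ allDiags l r) :
    (withBase l r S).card = S.card + if l + 2 ≤ r then 1 else 0 := by
  unfold withBase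
  split_ifs
  · rw [card_insert_of_notMem fun h => by simpa [IsDiag] using mem_allDiags.1 (hS h)]
  · rfl

lemma noncrossing_withBase (hS : S ⊆ allDiags l r) (hN : Noncrossing S) :
    Noncrossing (withBase l r S) := by
  intro p hp q hq
  have hpb := bounds_of_mem_withBase hS hp
  have hqb := bounds_of_mem_withBase hS hq
  rcases mem_withBase.1 hp with hp | ⟨rfl, -⟩ <;> rcases mem_withBase.1 hq with hq | ⟨rfl, -⟩
  · exact hN p hp q hq
  · rw [crosses_comm]
    exact not_crosses_of_le_of_le hpb.1 hpb.2.2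
  · exact not_crosses_of_le_of_le hqb.1 hqb.2.2
  · exact not_crosses_of_le_of_le le_rfl le_rfl

end withBase

/-- Glues triangulations `L` of `{l, …, k}` and `R` of `{k, …, r}` along the triangle
`{l, k, r}`. -/
noncomputable def glue (l k r : ℕ) (L R : Finset (ℕ × ℕ)) : Finset (ℕ × ℕ) :=
  withBase l k L ∪ withBase k r R

section glue

variable {l k r : ℕ} {L R : Finset (ℕ × ℕ)}

lemma glue_subset_allDiags (hlk : l < k) (hkr : k < r) (hL : L ⊆ allDiags l k)
    (hR : R ⊆ allDiags k r) : glue l k r L R ⊆ allDiags l r := by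
  intro p hp
  rw [mem_allDiags, IsDiag]
  rcases mem_union.1 hp with hp | hp
  · have := bounds_of_mem_withBase hL hp
    omega
  · have := bounds_of_mem_withBase hR hp
    omega

lemma noncrossing_glue (hL : L ⊆ allDiags l k) (hR : R ⊆ allDiags k r) (hLN : Noncrossing L)
    (hRN : Noncrossing R) : Noncrossing (glue l k r L R) :=
  (noncrossing_withBase hL hLN).union (noncrossing_withBase hR hRN)
    (fun p hp => by have := bounds_of_mem_withBase hL hp; omega)
    (fun q hq => (bounds_of_mem_withBase hR hq).1)

lemma card_glue (hL : L ⊆ allDiags l k) (hR : R ⊆ allDiags k r) :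
    (glue l k r L R).card = (withBase l k L).card + (withBase k r R).card := by
  refine card_union_of_disjoint (disjoint_left.2 fun p hpL hpR => ?_)
  have := bounds_of_mem_withBase hL hpL
  have := bounds_of_mem_withBase hR hpR
  omega

lemma card_withBase_of_mem_triangulations (hlk : l < k) (hL : L ∈ triangulations l k) :
    (withBase l k L).card = k - l - 1 := by
  rw [card_withBase (mem_triangulations.1 hL).1, (mem_triangulations.1 hL).2.1]
  split_ifs <;> omega

lemma glue_mem_triangulations (hlk : l < k) (hkr : k < r) (hL : L ∈ triangulations l k)
    (hR : R ∈ triangulations k r) : glue l k r L R ∈ triangulations l r := by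
  obtain ⟨hLd, -, hLN⟩ := mem_triangulations.1 hL
  obtain ⟨hRd, -, hRN⟩ := mem_triangulations.1 hR
  refine mem_triangulations.2 ⟨glue_subset_allDiags hlk hkr hLd hRd, ?_,
    noncrossing_glue hLd hRd hLN hRN⟩
  rw [card_glue hLd hRd, card_withBase_of_mem_triangulations hlk hL,
    card_withBase_of_mem_triangulations hkr hR]
  omega

end glue

/-- The third vertex of the triangle on the base `{l, r}`: the farthest vertex joined to `l` by
a diagonal of `S`, or `l + 1` if there is none. -/
noncomputable def apex (l : ℕ) (S : Finset (ℕ × ℕ)) : ℕ :=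
  (insert (l + 1) ((S.filter (·.1 = l)).image Prod.snd)).max' (insert_nonempty _ _)

noncomputable def leftPart (l k : ℕ) (S : Finset (ℕ × ℕ)) : Finset (ℕ × ℕ) :=
  (S.filter (·.2 ≤ k)).erase (l, k)

noncomputable def rightPart (k r : ℕ) (S : Finset (ℕ × ℕ)) : Finset (ℕ × ℕ) :=
  (S.filter (k ≤ ·.1)).erase (k, r)

section apex

variable {l k r : ℕ} {S : Finset (ℕ × ℕ)}

lemma lt_apex : l < apex l S :=
  le_max' _ (l + 1) (mem_insert_self _ _)

lemma le_apex_of_mem {j : ℕ} (h : (l, j) ∈ S) : j ≤ apex l S :=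
  le_max' _ j (mem_insert_of_mem (mem_image_of_mem Prod.snd
    (mem_filter.2 ⟨h, rfl⟩ : (l, j) ∈ S.filter (·.1 = l))))

lemma apex_eq_or_mem : apex l S = l + 1 ∨ (l, apex l S) ∈ S := by
  rcases mem_insert.1 (max'_mem _ (insert_nonempty (l + 1) _)) with h | h
  · exact Or.inl h
  · obtain ⟨p, hp, hp2⟩ := mem_image.1 h
    rw [mem_filter] at hp
    have : p = (l, apex l S) := Prod.ext hp.2 hp2
    exact Or.inr (this ▸ hp.1)

lemma apex_lt (hS : S ⊆ allDiags l r) (hlr : l + 2 ≤ r) : apex l S < r := by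
  rcases apex_eq_or_mem (l := l) (S := S) with h | h
  · omega
  · have := mem_allDiags.1 (hS h)
    unfold IsDiag at this
    omega

/-- A diagonal separating `l` from the apex would cross the diagonal from `l` to the apex. -/
lemma not_straddle_apex (hS : S ⊆ allDiags l r) (hN : Noncrossing S) {p : ℕ × ℕ} (hp : p ∈ S) :
    p.2 ≤ apex l S ∨ apex l S ≤ p.1 := by
  by_contra! h
  have hpd := mem_allDiags.1 (hS hp)
  unfold IsDiag at hpd
  by_cases hpl : p.1 = l
  · have := le_apex_of_mem (hpl ▸ hp : (l, p.2) ∈ S)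
    omega
  rcases apex_eq_or_mem (l := l) (S := S) with ha | ha
  · omega
  · exact hN _ ha p hp (by unfold Crosses; omega)

lemma mem_leftPart {p : ℕ × ℕ} : p ∈ leftPart l k S ↔ p ≠ (l, k) ∧ p ∈ S ∧ p.2 ≤ k := by
  rw [leftPart, mem_erase, mem_filter]

lemma mem_rightPart {p : ℕ × ℕ} : p ∈ rightPart k r S ↔ p ≠ (k, r) ∧ p ∈ S ∧ k ≤ p.1 := by
  rw [rightPart, mem_erase, mem_filter]

lemma leftPart_subset : leftPart l k S ⊆ S :=
  fun _ hp => (mem_leftPart.1 hp).2.1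

lemma rightPart_subset : rightPart k r S ⊆ S :=
  fun _ hp => (mem_rightPart.1 hp).2.1

lemma leftPart_subset_allDiags (hS : S ⊆ allDiags l r) : leftPart l k S ⊆ allDiags l k := by
  intro p hp
  obtain ⟨hne, hp, hpk⟩ := mem_leftPart.1 hp
  have := mem_allDiags.1 (hS hp)
  rw [mem_allDiags]
  unfold IsDiag at this ⊢
  exact ⟨this.1, this.2.1, hpk, fun h => hne (Prod.ext h.1 h.2)⟩

lemma rightPart_subset_allDiags (hS : S ⊆ allDiags l r) : rightPart k r S ⊆ allDiags k r := by
  intro p hp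
  obtain ⟨hne, hp, hkp⟩ := mem_rightPart.1 hp
  have := mem_allDiags.1 (hS hp)
  rw [mem_allDiags]
  unfold IsDiag at this ⊢
  exact ⟨hkp, this.2.1, this.2.2.1, fun h => hne (Prod.ext h.1 h.2)⟩

lemma subset_glue_parts (hS : S ⊆ allDiags l r) (hk : ∀ p ∈ S, p.2 ≤ k ∨ k ≤ p.1) :
    S ⊆ glue l k r (leftPart l k S) (rightPart k r S) := by
  intro p hp
  have hpd := mem_allDiags.1 (hS hp)
  unfold IsDiag at hpd
  simp only [glue, mem_union, mem_withBase, mem_leftPart, mem_rightPart]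
  rcases hk p hp with h | h
  · refine Or.inl ?_
    by_cases hl : p = (l, k)
    · exact Or.inr ⟨hl, by rw [hl] at hpd; exact hpd.2.1⟩
    · exact Or.inl ⟨hl, hp, h⟩
  · refine Or.inr ?_
    by_cases hr : p = (k, r)
    · exact Or.inr ⟨hr, by rw [hr] at hpd; exact hpd.2.1⟩
    · exact Or.inl ⟨hr, hp, h⟩

end apex

theorem card_le_of_noncrossing {l r : ℕ} {S : Finset (ℕ × ℕ)} (hS : S ⊆ allDiags l r)
    (hN : Noncrossing S) : S.card ≤ r - l - 2 := by
  induction hd : r - l using Nat.strong_induction_on generalizing l r S with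
  | _ d ih =>
  by_cases hlr : l + 2 ≤ r
  swap
  · rw [allDiags_eq_empty (by omega), subset_empty] at hS
    simp [hS]
  set k := apex l S
  have hlk : l < k := lt_apex
  have hkr : k < r := apex_lt hS hlr
  have hL := leftPart_subset_allDiags (k := k) hS
  have hR := rightPart_subset_allDiags (k := k) hS
  have hLc := ih (k - l) (by omega) hL (hN.subset leftPart_subset) rfl
  have hRc := ih (r - k) (by omega) hR (hN.subset rightPart_subset) rfl
  have := card_le_card (subset_glue_parts (k := k) hS fun p => not_straddle_apex hS hN)
  rw [card_glue hL hR, card_withBase hL, card_withBase hR] at this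
  split_ifs at this <;> omega

theorem glue_parts_apex {l r : ℕ} {T : Finset (ℕ × ℕ)} (hT : T ∈ triangulations l r)
    (hlr : l + 2 ≤ r) :
    leftPart l (apex l T) T ∈ triangulations l (apex l T) ∧
      rightPart (apex l T) r T ∈ triangulations (apex l T) r ∧
      glue l (apex l T) r (leftPart l (apex l T) T) (rightPart (apex l T) r T) = T := by
  obtain ⟨hS, hcard, hN⟩ := mem_triangulations.1 hT
  set k := apex l T
  have hlk : l < k := lt_apex
  have hkr : k < r := apex_lt hS hlr
  have hL := leftPart_subset_allDiags (k := k) hS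
  have hR := rightPart_subset_allDiags (k := k) hS
  have hLN := hN.subset (leftPart_subset (l := l) (k := k))
  have hRN := hN.subset (rightPart_subset (k := k) (r := r))
  have hLc := card_le_of_noncrossing hL hLN
  have hRc := card_le_of_noncrossing hR hRN
  have hsub := subset_glue_parts (k := k) hS fun p => not_straddle_apex hS hN
  have hG := card_glue (r := r) hL hR
  rw [card_withBase hL, card_withBase hR] at hG
  have hle := card_le_card hsub
  refine ⟨mem_triangulations.2 ⟨hL, ?_, hLN⟩, mem_triangulations.2 ⟨hR, ?_, hRN⟩,
    (eq_of_subset_of_card_le hsub ?_).symm⟩ <;> split_ifs at hG <;> omega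

section glue

variable {l k r : ℕ} {L R : Finset (ℕ × ℕ)}

lemma apex_glue (hlk : l < k) (hL : L ⊆ allDiags l k) (hR : R ⊆ allDiags k r) :
    apex l (glue l k r L R) = k := by
  refine le_antisymm (max'_le _ _ _ fun j hj => ?_) ?_
  · rcases mem_insert.1 hj with rfl | hj
    · exact hlk
    obtain ⟨p, hp, rfl⟩ := mem_image.1 hj
    rw [mem_filter] at hp
    rcases mem_union.1 hp.1 with h | h
    · exact (bounds_of_mem_withBase hL h).2.2
    · have := (bounds_of_mem_withBase hR h).1
      omega
  · by_cases h : l + 2 ≤ k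
    · exact le_apex_of_mem (mem_union_left _ (mem_withBase.2 (Or.inr ⟨rfl, h⟩)))
    · have : k = l + 1 := by omega
      exact this ▸ lt_apex

lemma leftPart_glue (hL : L ⊆ allDiags l k) (hR : R ⊆ allDiags k r) :
    leftPart l k (glue l k r L R) = L := by
  ext p
  simp only [mem_leftPart, glue, mem_union, mem_withBase]
  constructor
  · rintro ⟨hne, (h | h) | h, hpk⟩
    · exact h
    · exact absurd h.1 hne
    · have := bounds_of_mem_withBase hR (mem_withBase.2 h)
      omega
  · intro hp
    have := mem_allDiags.1 (hL hp)
    unfold IsDiag at this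
    exact ⟨fun h => this.2.2.2 (Prod.ext_iff.1 h), Or.inl (Or.inl hp), this.2.2.1⟩

lemma rightPart_glue (hL : L ⊆ allDiags l k) (hR : R ⊆ allDiags k r) :
    rightPart k r (glue l k r L R) = R := by
  ext p
  simp only [mem_rightPart, glue, mem_union, mem_withBase]
  constructor
  · rintro ⟨hne, h | h | h, hkp⟩
    · have := bounds_of_mem_withBase hL (mem_withBase.2 h)
      omega
    · exact h
    · exact absurd h.1 hne
  · intro hp
    have := mem_allDiags.1 (hR hp)
    unfold IsDiag at this
    exact ⟨fun h => this.2.2.2 (Prod.ext_iff.1 h), Or.inr (Or.inl hp), this.1⟩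

end glue

theorem sum_triangulations_eq_sum_glue {M : Type*} [AddCommMonoid M] {l r : ℕ}
    (hlr : l + 2 ≤ r) (f : Finset (ℕ × ℕ) → M) :
    ∑ T ∈ triangulations l r, f T =
      ∑ k ∈ Ico (l + 1) r, ∑ L ∈ triangulations l k, ∑ R ∈ triangulations k r,
        f (glue l k r L R) := by
  simp_rw [← sum_product', sum_sigma']
  refine sum_nbij' (fun T => ⟨apex l T, leftPart l (apex l T) T, rightPart (apex l T) r T⟩)
    (fun x => glue l x.1 r x.2.1 x.2.2) ?_ ?_ ?_ ?_ ?_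
  · intro T hT
    obtain ⟨hL, hR, -⟩ := glue_parts_apex hT hlr
    rw [mem_sigma, mem_product, mem_Ico]
    exact ⟨⟨lt_apex, apex_lt (mem_triangulations.1 hT).1 hlr⟩, hL, hR⟩
  · rintro ⟨k, L, R⟩ hx
    rw [mem_sigma, mem_product, mem_Ico] at hx
    exact glue_mem_triangulations hx.1.1 hx.1.2 hx.2.1 hx.2.2
  · intro T hT
    exact (glue_parts_apex hT hlr).2.2
  · rintro ⟨k, L, R⟩ hx
    rw [mem_sigma, mem_product, mem_Ico] at hx
    have hL := (mem_triangulations.1 hx.2.1).1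
    have hR := (mem_triangulations.1 hx.2.2).1
    rw [apex_glue hx.1.1 hL hR, leftPart_glue hL hR, rightPart_glue hL hR]
  · intro T hT
    rw [(glue_parts_apex hT hlr).2.2]

theorem card_triangulations (l m : ℕ) : (triangulations l (l + m + 1)).card = catalan m := by
  induction m using Nat.strong_induction_on generalizing l with
  | _ m ih =>
  rcases m with _ | m
  · simp [triangulations_eq_singleton_empty]
  rw [card_eq_sum_ones, sum_triangulations_eq_sum_glue (by omega),
    show l + (m + 1) + 1 = l + 1 + m + 1 by ring, sum_Ico_eq_sum_antidiagonal, catalan_succ']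
  refine sum_congr rfl fun p hp => ?_
  rw [HasAntidiagonal.mem_antidiagonal] at hp
  simp only [sum_const, smul_eq_mul, mul_one]
  rw [show l + 1 + p.1 = l + p.1 + 1 by ring, ih p.1 (by omega),
    show l + 1 + m + 1 = l + p.1 + 1 + p.2 + 1 by omega, ih p.2 (by omega)]

noncomputable def fanCount (l r : ℕ) (T : Finset (ℕ × ℕ)) : ℕ :=
  ((triangles l r T).filter (·.1 = l)).card

section triangles

variable {l k r : ℕ} {S L R : Finset (ℕ × ℕ)}

lemma mem_triangles {t : ℕ × ℕ × ℕ} :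
    t ∈ triangles l r S ↔ t.2.2 ≤ r ∧ t.1 < t.2.1 ∧ t.2.1 < t.2.2 ∧
      IsSide l r S t.1 t.2.1 ∧ IsSide l r S t.2.1 t.2.2 ∧ IsSide l r S t.1 t.2.2 := by
  rw [triangles, mem_filter, mem_product, mem_product, mem_range, mem_range, mem_range]
  constructor
  · rintro ⟨⟨-, -, h⟩, hs⟩
    exact ⟨by omega, hs⟩
  · rintro ⟨h, hab, hbc, hs⟩
    exact ⟨⟨by omega, by omega, by omega⟩, hab, hbc, hs⟩

lemma IsSide.bounds (hS : S ⊆ allDiags l r) {x y : ℕ} (h : IsSide l r S x y) :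
    l ≤ x ∧ y ≤ r := by
  rcases h with h | h
  · unfold IsEdge at h
    omega
  · have := mem_allDiags.1 (hS h)
    unfold IsDiag at this
    omega

lemma isSide_glue (hlk : l < k) (hkr : k < r) {x y : ℕ} :
    IsSide l r (glue l k r L R) x y ↔ IsSide l k L x y ∨ IsSide k r R x y ∨ (x = l ∧ y = r) := by
  simp only [IsSide, IsEdge, glue, mem_union, mem_withBase, Prod.mk.injEq]
  by_cases hxL : (x, y) ∈ L <;> by_cases hxR : (x, y) ∈ R <;>
    simp only [hxL, hxR, true_or, or_true, false_or, or_false]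
  all_goals omega

lemma isSide_left_of_isSide_glue (hlk : l < k) (hkr : k < r) (hR : R ⊆ allDiags k r) {x y : ℕ}
    (h : IsSide l r (glue l k r L R) x y) (hx : x < k) (hy : y < r) : IsSide l k L x y := by
  rcases (isSide_glue hlk hkr).1 h with h | h | h
  · exact h
  · exact absurd (h.bounds hR).1 (by omega)
  · omega

lemma isSide_right_of_isSide_glue (hlk : l < k) (hkr : k < r) (hL : L ⊆ allDiags l k) {x y : ℕ}
    (h : IsSide l r (glue l k r L R) x y) (hx : l < x) (hy : k < y) : IsSide k r R x y := by
  rcases (isSide_glue hlk hkr).1 h with h | h | h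
  · exact absurd (h.bounds hL).2 (by omega)
  · exact h
  · omega

lemma filter_triangles_glue (hlk : l < k) (hkr : k < r) (hL : L ⊆ allDiags l k)
    (hR : R ⊆ allDiags k r) :
    (triangles l r (glue l k r L R)).filter (·.1 = l) =
      insert (l, k, r) ((triangles l k L).filter (·.1 = l)) := by
  ext ⟨a, b, c⟩
  simp only [mem_filter, mem_insert, mem_triangles, Prod.mk.injEq]
  constructor
  · rintro ⟨⟨hc, hab, hbc, hsab, hsbc, hsac⟩, rfl⟩
    have hsab' := isSide_left_of_isSide_glue hlk hkr hR hsab hlk (by omega)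
    have hbk := (hsab'.bounds hL).2
    by_cases hcr : c = r
    · have := ((isSide_right_of_isSide_glue hlk hkr hL hsbc hab (by omega)).bounds hR).1
      exact Or.inl ⟨rfl, by omega, hcr⟩
    · have hsac' := isSide_left_of_isSide_glue hlk hkr hR hsac hlk (by omega)
      have hck := (hsac'.bounds hL).2
      exact Or.inr ⟨⟨hck, hab, hbc, hsab',
        isSide_left_of_isSide_glue hlk hkr hR hsbc (by omega) (by omega), hsac'⟩, rfl⟩
  · have ofLeft := fun {x y : ℕ} (h : IsSide l k L x y) =>
      (isSide_glue (R := R) hlk hkr).2 (Or.inl h)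
    rintro (⟨rfl, rfl, rfl⟩ | ⟨⟨hc, hab, hbc, hsab, hsbc, hsac⟩, rfl⟩)
    · exact ⟨⟨le_rfl, hlk, hkr, ofLeft (Or.inl (Or.inr ⟨rfl, rfl⟩)),
        (isSide_glue hlk hkr).2 (Or.inr (Or.inl (Or.inl (Or.inr ⟨rfl, rfl⟩)))),
        Or.inl (Or.inr ⟨rfl, rfl⟩)⟩, rfl⟩
    · exact ⟨⟨by omega, hab, hbc, ofLeft hsab, ofLeft hsbc, ofLeft hsac⟩, rfl⟩

end triangles

lemma fanCount_glue {l k r : ℕ} {L R : Finset (ℕ × ℕ)} (hlk : l < k) (hkr : k < r)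
    (hL : L ⊆ allDiags l k) (hR : R ⊆ allDiags k r) :
    fanCount l r (glue l k r L R) = fanCount l k L + 1 := by
  rw [fanCount, filter_triangles_glue hlk hkr hL hR, card_insert_of_notMem, fanCount]
  exact fun h => hkr.not_ge (mem_triangles.1 (mem_filter.1 h).1).1

lemma fanCount_empty (l : ℕ) : fanCount l (l + 1) ∅ = 0 := by
  refine card_eq_zero.2 (filter_eq_empty_iff.2 fun t ht _ => ?_)
  obtain ⟨hc, hab, hbc, hs, -⟩ := mem_triangles.1 ht
  have := hs.bounds (empty_subset _)
  omega

theorem sum_fanCount_succ {M : Type*} [AddCommMonoid M] (l m : ℕ) (f : ℕ → M) :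
    ∑ T ∈ triangulations l (l + (m + 1) + 1), f (fanCount l (l + (m + 1) + 1) T) =
      ∑ p ∈ antidiagonal m,
        catalan p.2 • ∑ L ∈ triangulations l (l + p.1 + 1), f (fanCount l (l + p.1 + 1) L + 1) := by
  rw [sum_triangulations_eq_sum_glue (by omega),
    show l + (m + 1) + 1 = l + 1 + m + 1 by ring, sum_Ico_eq_sum_antidiagonal]
  refine sum_congr rfl fun p hp => ?_
  rw [HasAntidiagonal.mem_antidiagonal] at hp
  rw [show l + 1 + p.1 = l + p.1 + 1 by ring, smul_sum]
  refine sum_congr rfl fun L hL => ?_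
  have hcard := card_triangulations (l + p.1 + 1) p.2
  rw [show l + p.1 + 1 + p.2 + 1 = l + 1 + m + 1 by omega] at hcard
  rw [← hcard, ← sum_const]
  refine sum_congr rfl fun R hR => ?_
  rw [fanCount_glue (by omega) (by omega) (mem_triangulations.1 hL).1 (mem_triangulations.1 hR).1]

theorem sum_fanCount (l m : ℕ) :
    ∑ T ∈ triangulations l (l + m + 1), (fanCount l (l + m + 1) T : ℚ) =
      catalan (m + 1) - catalan m := by
  induction m using Nat.strong_induction_on with
  | _ m ih =>
  rcases m with _ | m
  · simp [triangulations_eq_singleton_empty, fanCount_empty]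
  rw [sum_fanCount_succ l m (fun i => (i : ℚ))]
  have hconv := congrArg (Nat.cast : ℕ → ℚ) (catalan_add_two m)
  push_cast at hconv
  rw [hconv, add_sub_cancel_left]
  refine sum_congr rfl fun p hp => ?_
  rw [HasAntidiagonal.mem_antidiagonal] at hp
  push_cast
  rw [sum_add_distrib, ih p.1 (by omega), sum_const, card_triangulations, nsmul_eq_mul,
    nsmul_eq_mul]
  ring

theorem sum_fanCount_sq (l m : ℕ) :
    ∑ T ∈ triangulations l (l + m + 1), (fanCount l (l + m + 1) T : ℚ) ^ 2 =
      2 * catalan (m + 2) - 5 * catalan (m + 1) + catalan m := by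
  induction m using Nat.strong_induction_on with
  | _ m ih =>
  rcases m with _ | m
  · norm_num [triangulations_eq_singleton_empty, fanCount_empty, catalan_two]
  rw [sum_fanCount_succ l m (fun i => (i : ℚ) ^ 2)]
  have hconv2 := congrArg (Nat.cast : ℕ → ℚ) (catalan_add_two m)
  have hconv3 := congrArg (Nat.cast : ℕ → ℚ) (catalan_add_three m)
  push_cast at hconv2 hconv3
  have hsum : ∑ p ∈ antidiagonal m, (catalan p.2 : ℚ) *
      (2 * catalan (p.1 + 2) - 3 * catalan (p.1 + 1)) =
      2 * catalan (m + 3) - 5 * catalan (m + 2) + catalan (m + 1) := by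
    have hsplit : ∀ p ∈ antidiagonal m, (catalan p.2 : ℚ) *
        (2 * catalan (p.1 + 2) - 3 * catalan (p.1 + 1)) =
        2 * (catalan (p.1 + 2) * catalan p.2) - 3 * (catalan (p.1 + 1) * catalan p.2) :=
      fun _ _ => by ring
    rw [sum_congr rfl hsplit, sum_sub_distrib, ← mul_sum, ← mul_sum]
    linarith
  rw [← hsum]
  refine sum_congr rfl fun p hp => ?_
  rw [HasAntidiagonal.mem_antidiagonal] at hp
  push_cast
  simp only [add_sq, sum_add_distrib, ← mul_sum, ← sum_mul]
  rw [ih p.1 (by omega), sum_fanCount, sum_const, card_triangulations, nsmul_eq_mul,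
    nsmul_eq_mul]
  ring

lemma degOne_eq_fanCount {n : ℕ} {T : Finset (ℕ × ℕ)} (hT : T ⊆ allDiags 1 n) :
    degOne n T = fanCount 1 n T := by
  refine congrArg card (filter_congr fun t ht => ?_)
  obtain ⟨-, hab, hbc, hs, -⟩ := mem_triangles.1 ht
  have := (hs.bounds hT).1
  omega

lemma catalan_variance (m : ℕ) :
    (2 * catalan (m + 3) - 5 * catalan (m + 2) + catalan (m + 1) : ℚ) / catalan (m + 1) -
        ((catalan (m + 2) - catalan (m + 1) : ℚ) / catalan (m + 1)) ^ 2 =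
      2 * (2 * ((m : ℚ) + 3) - 3) * ((m : ℚ) + 1) * m / (((m : ℚ) + 3) ^ 2 * ((m : ℚ) + 4)) := by
  have hpos : (catalan (m + 1) : ℚ) ≠ 0 := by exact_mod_cast (catalan_pos (m + 1)).ne'
  have h2 := congrArg (Nat.cast : ℕ → ℚ) (succ_succ_mul_catalan_succ (m + 1))
  have h3 := congrArg (Nat.cast : ℕ → ℚ) (succ_succ_mul_catalan_succ (m + 2))
  push_cast at h2 h3
  have hc2 : (catalan (m + 2) : ℚ) = 2 * (2 * m + 3) * catalan (m + 1) / (m + 3) := by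
    rw [eq_div_iff (by positivity)]
    linarith
  have hc3 : (catalan (m + 3) : ℚ) = 2 * (2 * m + 5) * catalan (m + 2) / (m + 4) := by
    rw [eq_div_iff (by positivity)]
    linarith
  rw [hc3, hc2]
  field_simp
  ring

/-- the variance of the number of triangles containing vertex `1` is
`2(2n-3)(n-2)(n-3)/(n^2(n+1))` (Lemma 5(3)). -/
theorem degree_variance (n : ℕ) (hn : 3 ≤ n) :
    (∑ T ∈ triangulations 1 n, (degOne n T : ℚ) ^ 2) / (catalan (n - 2) : ℚ) -
        ((∑ T ∈ triangulations 1 n, (degOne n T : ℚ)) / (catalan (n - 2) : ℚ)) ^ 2 =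
      2 * (2 * (n : ℚ) - 3) * ((n : ℚ) - 2) * ((n : ℚ) - 3) / ((n : ℚ) ^ 2 * ((n : ℚ) + 1)) := by
  have hdeg : ∀ T ∈ triangulations 1 n, degOne n T = fanCount 1 n T :=
    fun T hT => degOne_eq_fanCount (mem_triangulations.1 hT).1
  rw [sum_congr rfl fun T hT => congrArg (fun d : ℕ => (d : ℚ) ^ 2) (hdeg T hT),
    sum_congr rfl fun T hT => congrArg (Nat.cast : ℕ → ℚ) (hdeg T hT)]
  obtain ⟨m, rfl⟩ : ∃ m, n = 1 + (m + 1) + 1 := ⟨n - 3, by omega⟩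
  rw [sum_fanCount_sq, sum_fanCount, show 1 + (m + 1) + 1 - 2 = m + 1 by omega, catalan_variance]
  push_cast
  ring
end

section
/- For every integer s ≥ 0, 2 · ∑_{j=0}^{s} C_j · binom(2s−2j, s−j) = binom(2s+2, s+1), where C_m denotes the m-th Catalan number. -/
open Finset

lemma lemA (n : ℕ) :
    Nat.centralBinom (n + 1) + 2 * catalan n = 4 * Nat.centralBinom n := by
  have h1 := Nat.succ_mul_centralBinom_succ n
  have h2 := succ_mul_catalan_eq_centralBinom n
  have h : (n + 1) * (Nat.centralBinom (n + 1) + 2 * catalan n)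
      = (n + 1) * (4 * Nat.centralBinom n) := by
    have e : (n + 1) * (Nat.centralBinom (n + 1) + 2 * catalan n)
        = (n + 1) * Nat.centralBinom (n + 1) + 2 * ((n + 1) * catalan n) := by ring
    rw [e, h1, h2]; ring
  exact Nat.eq_of_mul_eq_mul_left (Nat.succ_pos n) h

lemma catalan_succ_range (n : ℕ) :
    catalan (n + 1) = ∑ i ∈ Finset.range (n + 1), catalan i * catalan (n - i) := by
  rw [catalan_succ, Finset.sum_range fun i => catalan i * catalan (n - i)]

lemma key (s : ℕ) :
    2 * ∑ j ∈ Finset.range (s + 1), catalan j * Nat.centralBinom (s - j) =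
      Nat.centralBinom (s + 1) := by
  induction s with
  | zero => simp [Nat.centralBinom]
  | succ s ih =>
    rw [Finset.sum_range_succ]
    have hX : 2 * (∑ j ∈ Finset.range (s + 1), catalan j * Nat.centralBinom (s + 1 - j))
        + 4 * (∑ j ∈ Finset.range (s + 1), catalan j * catalan (s - j))
        = 8 * ∑ j ∈ Finset.range (s + 1), catalan j * Nat.centralBinom (s - j) := by
      rw [Finset.mul_sum, Finset.mul_sum, Finset.mul_sum, ← Finset.sum_add_distrib]
      apply Finset.sum_congr rfl
      intro j hj
      have hjs : j ≤ s := by simpa [Nat.lt_succ_iff] using hj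
      have h1 : s + 1 - j = (s - j) + 1 := by omega
      rw [h1]
      have h2 := lemA (s - j)
      have e : 2 * (catalan j * Nat.centralBinom (s - j + 1)) +
          4 * (catalan j * catalan (s - j)) =
          2 * (catalan j * (Nat.centralBinom (s - j + 1) + 2 * catalan (s - j))) := by ring
      rw [e, h2]; ring
    have hC := catalan_succ_range s
    have hA := lemA (s + 1)
    have h0 : s + 1 - (s + 1) = 0 := by omega
    rw [h0, Nat.centralBinom_zero, mul_one]
    omega

/-- a Catalan-number convolution identity. -/
theorem catalan_convolution (s : ℕ) :
    2 * ∑ j ∈ Finset.range (s + 1), catalan j * (2 * s - 2 * j).choose (s - j) =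
      (2 * s + 2).choose (s + 1) := by
  have h : ∀ j ∈ Finset.range (s + 1),
      catalan j * (2 * s - 2 * j).choose (s - j) = catalan j * Nat.centralBinom (s - j) := by
    intro j hj
    congr 1
    rw [Nat.centralBinom]
    congr 1
    omega
  rw [Finset.sum_congr rfl h, key s, Nat.centralBinom,
    show 2 * (s + 1) = 2 * s + 2 by ring]
end
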